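/- arXiv:0710.4033 — 6 statements merged into one kernel-verified Lean document; each statement's English description precedes it below -/
import Mathlib

section
/- Let m ≥ 2 and n = 2^{m+1} - 4. For every integer s with (n+1)/3 ≤ s ≤ (n+1)/2, the binomial coefficient C(s, 3s - (n+1)) is even. -/
namespace Nat

theorem two_dvd_choose_of_even_of_odd {s b : ℕ} (hs : Even s) (hb : Odd b) : 2 ∣ choose s b := by
  have lucas := Choose.choose_modEq_choose_mod_mul_choose_div_nat (p := 2) (n := s) (k := b)
  rw [Nat.even_iff.mp hs, Nat.odd_iff.mp hb, choose_zero_succ, zero_mul] at lucas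
  exact Nat.modEq_zero_iff_dvd.mp lucas

theorem choose_modEq_choose_div_two_of_odd_of_odd {s b : ℕ} (hs : Odd s) (hb : Odd b) :
    choose s b ≡ choose (s / 2) (b / 2) [MOD 2] := by
  have lucas := Choose.choose_modEq_choose_mod_mul_choose_div_nat (p := 2) (n := s) (k := b)
  rwa [Nat.odd_iff.mp hs, Nat.odd_iff.mp hb, choose_self, one_mul] at lucas

/-- `b` is odd, so by Lucas' theorem either `s` is even and `C(s, b)` is even, or both are odd and
halving them preserves the shape `2s + b + 3 = 2^t`. -/
theorem two_dvd_choose_of_two_mul_add_add_three_eq_two_pow {s b t : ℕ}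
    (h : 2 * s + b + 3 = 2 ^ t) : 2 ∣ choose s b := by
  induction t generalizing s b with
  | zero => omega
  | succ t ih =>
    rw [pow_succ] at h
    have hb : Odd b := Nat.odd_iff.mpr (by omega)
    rcases Nat.even_or_odd s with hs | hs
    · exact two_dvd_choose_of_even_of_odd hs hb
    · have halved : 2 * (s / 2) + b / 2 + 3 = 2 ^ t := by
        have := Nat.odd_iff.mp hs
        omega
      exact Nat.modEq_zero_iff_dvd.mp <| (choose_modEq_choose_div_two_of_odd_of_odd hs hb).trans
        (Nat.modEq_zero_iff_dvd.mpr (ih halved))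

end Nat

theorem g_n_plus_one_vanishes_general (m : ℕ) (n : ℕ) (hn : n = 2 ^ (m + 1) - 4)
    (s : ℕ) (hs1 : n + 1 ≤ 3 * s) (hs2 : 2 * s ≤ n + 1) :
    Nat.choose s (3 * s - (n + 1)) % 2 = 0 := by
  rw [← Nat.choose_symm (by omega), ← Nat.dvd_iff_mod_eq_zero]
  exact Nat.two_dvd_choose_of_two_mul_add_add_three_eq_two_pow (t := m + 1) (by omega)

/-- For `n = 2^(m+1) - 4` with `m ≥ 2`, every coefficient `C(s, 3s-(n+1))`
with `(n+1)/3 ≤ s ≤ (n+1)/2` is even. -/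
theorem g_n_plus_one_vanishes (m : ℕ) (hm : 2 ≤ m) (n : ℕ) (hn : n = 2 ^ (m + 1) - 4)
    (s : ℕ) (hs1 : n + 1 ≤ 3 * s) (hs2 : 2 * s ≤ n + 1) :
    Nat.choose s (3 * s - (n + 1)) % 2 = 0 :=
  g_n_plus_one_vanishes_general m n hn s hs1 hs2
end

section
/- Let m ≥ 2, n = 2^{m+1} - 4, and let s be an integer with (n+2)/3 ≤ s ≤ (n+2)/2, with binary digits ε_m(s) = (s_{m-1},...,s_0). Then C(s, 3s - (n+2)) is odd if and only if for every index j with 0 ≤ j ≤ m-2, s_j = 0 implies s_{j+1} = 1. -/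
lemma choose_mod_two_iff (n : ℕ) : ∀ k, n.choose k % 2 = 1 ↔
    ∀ i, k.testBit i = true → n.testBit i = true := by
  induction n using Nat.strong_induction_on with
  | _ n ih =>
    intro k
    haveI : Fact (Nat.Prime 2) := ⟨Nat.prime_two⟩
    rcases Nat.eq_zero_or_pos n with rfl | hn
    · rcases Nat.eq_zero_or_pos k with rfl | hk
      · simp
      · simp only [Nat.choose_eq_zero_of_lt hk]
        constructor
        · omega
        · intro h
          obtain ⟨i, hi, -⟩ := Nat.exists_most_significant_bit (by omega : k ≠ 0)
          have := h i hi
          simp [Nat.zero_testBit] at this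
    · have hmod : n.choose k % 2 = (Nat.choose (n % 2) (k % 2) * Nat.choose (n / 2) (k / 2)) % 2 :=
        Choose.choose_modEq_choose_mod_mul_choose_div_nat (p := 2)
      have ih2 := ih (n / 2) (Nat.div_lt_self hn one_lt_two) (k / 2)
      have hsplit : (∀ i, k.testBit i = true → n.testBit i = true) ↔
          ((k.testBit 0 = true → n.testBit 0 = true) ∧
            ∀ i, (k / 2).testBit i = true → (n / 2).testBit i = true) := by
        constructor
        · intro h
          refine ⟨h 0, fun i hi => ?_⟩
          rw [Nat.testBit_div_two] at hi ⊢
          exact h _ hi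
        · rintro ⟨h0, h1⟩ i hi
          cases i with
          | zero => exact h0 hi
          | succ j =>
            rw [Nat.testBit_add_one] at hi ⊢
            exact h1 j hi
      rw [hmod, hsplit, ← ih2]
      have hn2 := Nat.mod_two_eq_zero_or_one n
      have hk2 := Nat.mod_two_eq_zero_or_one k
      have hb : n.testBit 0 = decide (n % 2 = 1) := Nat.testBit_zero n
      have hbk : k.testBit 0 = decide (k % 2 = 1) := Nat.testBit_zero k
      have hc2 := Nat.mod_two_eq_zero_or_one (Nat.choose (n / 2) (k / 2))
      rcases hn2 with h | h <;> rcases hk2 with h' | h' <;>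
        simp [h, h', Nat.mul_mod, hb, hbk]

/-- For `n = 2^(m+1) - 4` with `m ≥ 2` and `(n+2)/3 ≤ s ≤ (n+2)/2`,
`C(s, 3s-(n+2))` is odd iff the binary digits `(s_{m-1},…,s_0)` of `s`
satisfy: `s_j = 0` implies `s_{j+1} = 1` for all `0 ≤ j ≤ m-2`. -/
theorem g_n_plus_two_coeff (m : ℕ) (hm : 2 ≤ m) (n : ℕ) (hn : n = 2 ^ (m + 1) - 4)
    (s : ℕ) (hs1 : n + 2 ≤ 3 * s) (hs2 : 2 * s ≤ n + 2) :
    Nat.choose s (3 * s - (n + 2)) % 2 = 1 ↔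
      ∀ j ≤ m - 2, s.testBit j = false → s.testBit (j + 1) = true := by
  have hpow : 2 ^ (m + 1) = 2 * 2 ^ m := by ring
  have hpm : 8 ≤ 2 ^ (m + 1) := by
    calc (8 : ℕ) = 2 ^ 3 := rfl
    _ ≤ 2 ^ (m + 1) := Nat.pow_le_pow_right (by norm_num) (by omega)
  -- basic bounds on s
  have hslt : s < 2 ^ m := by omega
  have hsge : 2 ^ (m - 1) ≤ s := by
    have h2 : 2 ^ m = 2 * 2 ^ (m - 1) := by
      rw [← pow_succ']
      congr 1
      omega
    omega
  -- s has top bit set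
  have htop : s.testBit (m - 1) = true := by
    have hdiv : s / 2 ^ (m - 1) = 1 := by
      apply Nat.div_eq_of_lt_le
      · simpa using hsge
      · have h2 : 2 ^ m = 2 * 2 ^ (m - 1) := by
          rw [← pow_succ']; congr 1; omega
        omega
    rw [Nat.testBit_eq_decide_div_mod_eq, hdiv]; decide
  -- rewrite the binomial coefficient
  set t := (n + 2) - 2 * s with ht
  have hts : t ≤ s := by omega
  have hk : 3 * s - (n + 2) = s - t := by omega
  rw [hk, Nat.choose_symm hts, choose_mod_two_iff]
  -- t = 2 * (2^m - (s+1))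
  have ht2 : t = 2 * (2 ^ m - (s + 1)) := by omega
  have htb : ∀ j, t.testBit (j + 1) = (decide (j < m) && ! s.testBit j) := by
    intro j
    rw [ht2, Nat.testBit_add_one, Nat.mul_div_cancel_left _ (by norm_num),
      Nat.testBit_two_pow_sub_succ hslt]
  have htb0 : t.testBit 0 = false := by
    rw [ht2]
    simp [Nat.testBit_zero, Nat.mul_mod_right]
  constructor
  · intro h j hj hj0
    have := h (j + 1)
    rw [htb j] at this
    have hjm : j < m := by omega
    simp [hjm, hj0] at this
    exact this
  · intro h i hi
    cases i with
    | zero => rw [htb0] at hi; exact absurd hi (by simp)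
    | succ j =>
      rw [htb j] at hi
      by_cases hjm : j < m
      · simp [hjm] at hi
        by_cases hj2 : j ≤ m - 2
        · exact h j hj2 hi
        · have : j = m - 1 := by omega
          rw [this] at hi
          rw [htop] at hi
          exact absurd hi (by simp)
      · simp [hjm] at hi
end

section
/- Let m ≥ 2, n = 2^{m+1} - 4, and let s' be an integer with (n+3)/3 ≤ s' ≤ (n+3)/2, with binary digits ε_m(s') = (s_{m-1},...,s_1,s_0). Then C(s', 3s' - (n+3)) is odd if and only if s_0 = 1 and for every index j with 1 ≤ j ≤ m-2, s_j = 0 implies s_{j+1} = 1. -/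
/-!
Since `3s' - (n+3) ≤ s'`, symmetry gives `C(s', 3s' - (n+3)) = C(s', 2^(m+1) - 1 - 2s')`, and the
lower index is the `(m+1)`-bit complement of `2s'`. By Lucas' theorem mod 2 the coefficient is odd
iff that complement is a bitwise submask of `s'`, i.e. iff `s_0 = 1` and `s_j = 0 → s_{j+1} = 1`
for all `j < m`. The bounds on `s'` force `2^(m-1) ≤ s' < 2^m`, so `s_{m-1} = 1` and the
conditions at `j = 0` and `j = m - 1` hold automatically.
-/

namespace Nat

theorem choose_mod_two_eq_one_iff_forall_testBit (n k : ℕ) :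
    n.choose k % 2 = 1 ↔ ∀ i, k.testBit i → n.testBit i := by
  induction n using Nat.strong_induction_on generalizing k with
  | _ n ih =>
  rcases n.eq_zero_or_pos with rfl | hn
  · simp only [zero_testBit, Bool.false_eq_true, imp_false, Bool.not_eq_true]
    refine ⟨fun h => ?_, fun h => by simp [zero_of_testBit_eq_false h]⟩
    rcases k with _ | k
    · simp
    · simp at h
  · have lucas : n.choose k % 2 = (n % 2).choose (k % 2) * (n / 2).choose (k / 2) % 2 :=
      Choose.choose_modEq_choose_mod_mul_choose_div_nat
    rw [lucas, Nat.mul_mod, ← and_forall_add_one]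
    simp only [testBit_add_one, ← ih (n / 2) (div_lt_self hn one_lt_two), testBit_zero,
      decide_eq_true_eq]
    rcases n.mod_two_eq_zero_or_one with hn2 | hn2 <;>
      rcases k.mod_two_eq_zero_or_one with hk2 | hk2 <;>
      rcases (n / 2).choose (k / 2) |>.mod_two_eq_zero_or_one with hc | hc <;>
      simp [hn2, hk2, hc]

theorem testBit_two_mul_zero (s : ℕ) : (2 * s).testBit 0 = false := by
  simp [testBit_zero]

theorem testBit_two_mul_add_one (s j : ℕ) : (2 * s).testBit (j + 1) = s.testBit j := by
  rw [testBit_add_one, Nat.mul_div_cancel_left s two_pos]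

theorem choose_two_pow_succ_sub_two_mul_mod_two_eq_one_iff {m s : ℕ} (hs : s < 2 ^ m) :
    s.choose (2 ^ (m + 1) - (2 * s + 1)) % 2 = 1 ↔
      s.testBit 0 ∧ ∀ j < m, s.testBit j = false → s.testBit (j + 1) := by
  have hcompl := testBit_two_pow_sub_succ (show 2 * s < 2 ^ (m + 1) by rw [pow_succ]; omega)
  rw [choose_mod_two_eq_one_iff_forall_testBit, ← and_forall_add_one]
  simp only [hcompl, testBit_two_mul_zero, testBit_two_mul_add_one]
  simp

end Nat

/-- For `n = 2^(m+1) - 4` with `m ≥ 2` and `(n+3)/3 ≤ s' ≤ (n+3)/2` with binary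
digits `(s_{m-1},…,s_1,s_0)`, the coefficient `C(s', 3s'-(n+3))` is odd iff
`s_0 = 1` and for every `1 ≤ j ≤ m-2`, `s_j = 0` implies `s_{j+1} = 1`. -/
theorem g_n_plus_three_coeff (m : ℕ) (hm : 2 ≤ m) (n : ℕ) (hn : n = 2 ^ (m + 1) - 4)
    (s' : ℕ) (hs1 : n + 3 ≤ 3 * s') (hs2 : 2 * s' ≤ n + 3) :
    Nat.choose s' (3 * s' - (n + 3)) % 2 = 1 ↔
      s'.testBit 0 = true ∧
        ∀ j, 1 ≤ j → j ≤ m - 2 → s'.testBit j = false → s'.testBit (j + 1) = true := by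
  have h2 : 2 ^ m = 2 * 2 ^ (m - 1) := by rw [← pow_succ', Nat.sub_add_cancel (by omega)]
  have h4 : 2 ^ (m + 1) = 2 * 2 ^ m := pow_succ' 2 m
  have hlow : 2 ^ (m - 1) ≤ s' := by omega
  have hhigh : s' < 2 ^ m := by have := (m - 1).one_le_two_pow; omega
  have htop : s'.testBit (m - 1) := Nat.testBit_of_two_pow_le_and_two_pow_add_one_gt hlow
    (by rwa [Nat.sub_add_cancel (by omega : 1 ≤ m)])
  rw [← Nat.choose_symm (show 3 * s' - (n + 3) ≤ s' by omega),
    show s' - (3 * s' - (n + 3)) = 2 ^ (m + 1) - (2 * s' + 1) by omega,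
    Nat.choose_two_pow_succ_sub_two_mul_mod_two_eq_one_iff hhigh]
  refine and_congr_right fun h0 => ⟨fun h j _ hj => h j (by omega), fun h j hj hbit => ?_⟩
  obtain rfl | hj0 := j.eq_zero_or_pos
  · simp [h0] at hbit
  obtain rfl | hjm := eq_or_lt_of_le (show j ≤ m - 1 by omega)
  · simp [htop] at hbit
  · exact h j hj0 (by omega) hbit
end

section
/- Let m ≥ 2, n = 2^{m+1} - 4. Define S'_m to be the set of integers s' with (n+3)/3 ≤ s' ≤ (n+3)/2 whose binary digits (s_{m-1},...,s_1,1) have last digit 1 and satisfy: s_j = 0 implies s_{j+1} = 1 (for 1 ≤ j ≤ m-2). Define S_{m-1} analogously with n' = 2^m - 4 in place of n. Then the map ι(s) = 2s + 1 is a bijection from S_{m-1} onto S'_m. -/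
/-- `S'cond m n s'` : `s'` lies in `S'_m` for the parameter `n`, i.e.
`(n+3)/3 ≤ s' ≤ (n+3)/2`, the last binary digit of `s'` is `1`, and the
digits satisfy: `s_j = 0` implies `s_{j+1} = 1` for `1 ≤ j ≤ m-2`. -/
def Scond' (m n s' : ℕ) : Prop :=
  n + 3 ≤ 3 * s' ∧ 2 * s' ≤ n + 3 ∧ s'.testBit 0 = true ∧
    ∀ j, 1 ≤ j → j ≤ m - 2 → s'.testBit j = false → s'.testBit (j + 1) = true

/-- `Scond k n s` : `s` lies in `S_k` for the parameter `n`, i.e.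
`(n+2)/3 ≤ s ≤ (n+2)/2` and the binary digits of `s` satisfy:
`s_j = 0` implies `s_{j+1} = 1`. -/
def Scond (k n s : ℕ) : Prop :=
  n + 2 ≤ 3 * s ∧ 2 * s ≤ n + 2 ∧
    ∀ j ≤ k - 2, s.testBit j = false → s.testBit (j + 1) = true

/-!
Since `n = 2 n' + 4`, the interval condition for `2s + 1` relative to `n` is the one for `s`
relative to `n'`, and the binary digits of `2s + 1` are those of `s` shifted up past a trailing `1`,
so the digit conditions correspond as well.
-/

theorem Nat.testBit_two_mul_add_one_succ (s j : ℕ) :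
    (2 * s + 1).testBit (j + 1) = s.testBit j := by
  rw [← Nat.bit_true_apply, Nat.testBit_bit_succ]

theorem scond'_two_mul_add_one_iff {m n' s : ℕ} (hm : 2 ≤ m) (hn' : n' + 4 = 2 ^ m) :
    Scond' m (2 * n' + 4) (2 * s + 1) ↔ Scond (m - 1) n' s := by
  simp only [Scond', Scond]
  constructor
  · rintro ⟨hlow, hhigh, -, hdigits⟩
    refine ⟨by omega, by omega, fun j hj hbit => ?_⟩
    rcases Nat.lt_or_ge m 3 with hm2 | hm3
    · -- `m - 1 - 2` truncates to `0`, so `Scond` also constrains digit `0`;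
      -- but here `n' = 0` forces `s = 1`.
      obtain rfl : m = 2 := by omega
      obtain rfl : s = 1 := by norm_num at hn'; omega
      obtain rfl : j = 0 := by omega
      exact absurd hbit (by decide)
    · rw [← Nat.testBit_two_mul_add_one_succ] at hbit ⊢
      exact hdigits (j + 1) (by omega) (by omega) hbit
  · rintro ⟨hlow, hhigh, hdigits⟩
    refine ⟨by omega, by omega, by simp, fun j hj₁ hj₂ hbit => ?_⟩
    obtain ⟨i, rfl⟩ : ∃ i, j = i + 1 := ⟨j - 1, by omega⟩
    rw [Nat.testBit_two_mul_add_one_succ] at hbit ⊢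
    exact hdigits i (by omega) hbit

/-- For `m ≥ 2`, `n = 2^(m+1) - 4` and `n' = 2^m - 4`, the map `ι(s) = 2s + 1`
is a bijection from `S_{m-1}` (for `n'`) onto `S'_m` (for `n`). -/
theorem iota_bijective (m : ℕ) (hm : 2 ≤ m) (n n' : ℕ)
    (hn : n = 2 ^ (m + 1) - 4) (hn' : n' = 2 ^ m - 4) :
    Set.BijOn (fun s => 2 * s + 1)
      {s | Scond (m - 1) n' s} {s' | Scond' m n s'} := by
  have hpow : n' + 4 = 2 ^ m := by
    have : 2 ^ 2 ≤ 2 ^ m := Nat.pow_le_pow_right two_pos hm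
    omega
  obtain rfl : n = 2 * n' + 4 := by rw [hn, pow_succ]; omega
  refine ⟨fun s hs => (scond'_two_mul_add_one_iff hm hpow).2 hs,
    fun a _ b _ h => by simp only at h; omega, fun s' hs' => ?_⟩
  obtain ⟨s, rfl⟩ : Odd s' := Nat.odd_iff.2 (by simpa using hs'.2.2.1)
  exact ⟨s, (scond'_two_mul_add_one_iff hm hpow).1 hs', rfl⟩
end

section
/- Let m ≥ 2 and n = 2^{m+1} - 4. In the quotient ring R = ℤ/2[w2, w3]/J_n, where J_n is generated by the homogeneous components of degrees n+1, n+2, n+3 of (1 + w2 + w3)^{-1} (equivalently, by g_r = Σ_{r/3 ≤ s ≤ r/2} C(s, 3s-r) w2^{3s-r} w3^{r-2s} for r = n+1, n+2, n+3, working over ℤ/2), the homogeneous generator g_{n+1} is the zero polynomial. -/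
open MvPolynomial

/-- The generator `g_r = Σ_{r/3 ≤ s ≤ r/2} C(s, 3s-r) w2^(3s-r) w3^(r-2s)` of
the ideal `J_n`, as a polynomial in `ℤ/2[w2, w3]` (`X 0 = w2`, `X 1 = w3`). -/
noncomputable def gGen (r : ℕ) : MvPolynomial (Fin 2) (ZMod 2) :=
  ∑ s ∈ Finset.Icc ((r + 2) / 3) (r / 2),
    (Nat.choose s (3 * s - r) : ZMod 2) • (X 0 ^ (3 * s - r) * X 1 ^ (r - 2 * s))

private lemma lucas_step (a b : ℕ) (h : Nat.choose a b % 2 = 1) :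
    Nat.choose (a % 2) (b % 2) % 2 = 1 ∧ Nat.choose (a / 2) (b / 2) % 2 = 1 := by
  haveI : Fact (Nat.Prime 2) := ⟨Nat.prime_two⟩
  have key := (Choose.choose_modEq_choose_mod_mul_choose_div_nat (n := a) (k := b) (p := 2))
  have h2 : (Nat.choose (a % 2) (b % 2) * Nat.choose (a / 2) (b / 2)) % 2 = 1 := by
    unfold Nat.ModEq at key
    omega
  rw [Nat.mul_mod] at h2
  rcases Nat.mod_two_eq_zero_or_one (Nat.choose (a % 2) (b % 2)) with hx | hx <;>
    rcases Nat.mod_two_eq_zero_or_one (Nat.choose (a / 2) (b / 2)) with hy | hy <;>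
      rw [hx, hy] at h2 <;> simp_all

private lemma no_carry_free (k : ℕ) : ∀ t u : ℕ,
    Nat.choose (t + u) t % 2 = 1 → 2 * t + 3 * u + 3 ≠ 2 ^ k := by
  induction k with
  | zero => intro t u _ heq; simp at heq
  | succ k ih =>
    intro t u hodd heq
    -- 2^(k+1) is even, so u is odd
    have hpow : 2 ^ (k + 1) = 2 * 2 ^ k := by ring
    have hu : u % 2 = 1 := by omega
    -- t must be even, else the low-bit Lucas factor is C(0,1)=0
    have ⟨hlo, hhi⟩ := lucas_step (t + u) t hodd
    have ht : t % 2 = 0 := by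
      by_contra h
      have ht1 : t % 2 = 1 := by omega
      have : (t + u) % 2 = 0 := by omega
      rw [this, ht1] at hlo
      simp [Nat.choose] at hlo
    -- recurse on the high bits
    have hdiv : (t + u) / 2 = t / 2 + u / 2 := by omega
    rw [hdiv] at hhi
    exact ih (t / 2) (u / 2) hhi (by omega)

/-- For `m ≥ 2` and `n = 2^(m+1) - 4`, the generator `g_{n+1}` of `J_n`
is the zero polynomial. -/
theorem gGen_n_plus_one_eq_zero (m : ℕ) (hm : 2 ≤ m) (n : ℕ)
    (hn : n = 2 ^ (m + 1) - 4) : gGen (n + 1) = 0 := by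
  have h8 : 8 ≤ 2 ^ (m + 1) := by
    calc (8 : ℕ) = 2 ^ 3 := rfl
    _ ≤ 2 ^ (m + 1) := Nat.pow_le_pow_right (by norm_num) (by omega)
  set r := n + 1 with hr
  have hr3 : r + 3 = 2 ^ (m + 1) := by omega
  unfold gGen
  apply Finset.sum_eq_zero
  intro s hs
  rw [Finset.mem_Icc] at hs
  have h3 : r ≤ 3 * s := by omega
  have h2 : 2 * s ≤ r := by omega
  -- the binomial coefficient is even
  have hchoose : Nat.choose s (3 * s - r) % 2 = 0 := by
    by_contra hodd
    have hodd' : Nat.choose s (3 * s - r) % 2 = 1 := by omega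
    set t := 3 * s - r with htdef
    set u := r - 2 * s with hudef
    have hsum : t + u = s := by omega
    have : Nat.choose (t + u) t % 2 = 1 := by rw [hsum]; exact hodd'
    exact no_carry_free (m + 1) t u this (by omega)
  have : (Nat.choose s (3 * s - r) : ZMod 2) = 0 :=
    (ZMod.natCast_eq_zero_iff _ 2).mpr (by omega)
  rw [this, zero_smul]
end

section
/- Let m ≥ 2, n = 2^{m+1} - 4, and let J_n ⊆ ℤ/2[w2,w3] be the ideal generated by g_{n+1}, g_{n+2}, g_{n+3}, where g_r = Σ_{r/3 ≤ s ≤ r/2} C(s,3s-r) w2^{3s-r} w3^{r-2s}. Then the cup-length of the quotient ring R = ℤ/2[w2,w3]/J_n (with augmentation ideal generated by w2, w3) equals n; that is, there exist n elements of the augmentation ideal with nonzero product, but any product of n+1 elements of the augmentation ideal is zero. -/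
open MvPolynomial

/-- The ideal `J_n = (g_{n+1}, g_{n+2}, g_{n+3})`. -/
noncomputable def Jideal (n : ℕ) : Ideal (MvPolynomial (Fin 2) (ZMod 2)) :=
  Ideal.span {gGen (n + 1), gGen (n + 2), gGen (n + 3)}

/-- The quotient ring `R = ℤ/2[w2, w3]/J_n`. -/
noncomputable abbrev Rquot (n : ℕ) := MvPolynomial (Fin 2) (ZMod 2) ⧸ Jideal n

/-- The augmentation ideal of `R`, generated by (the classes of) `w2, w3`. -/
noncomputable def augIdeal (n : ℕ) : Ideal (Rquot n) :=
  Ideal.span {Ideal.Quotient.mk (Jideal n) (X 0), Ideal.Quotient.mk (Jideal n) (X 1)}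

/-!
Write `x = w₂`, `y = w₃`. The coefficient of `x^a y^b` in `g_r` is `C(a+b, a)` when `2a + 3b = r`,
so Pascal's rule gives `g_{r+3} = x g_{r+1} + y g_r`, and in characteristic 2 this recursion yields
`g_{2r+2} = g_{r+1}² + x g_r²` and `g_{2r+3} = y g_r²`. Hence `a_m = g_{2^(m+1)-2}` and
`b_m = g_{2^(m+1)-1}` satisfy `a_{m+1} = b_m² + x a_m²`, `b_{m+1} = y a_m²`, while
`g_{2^(m+1)-3} = 0` for `m ≥ 1`, so `J_n = (a_m, b_m)` for `n = 2^(m+1) - 4`.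

Every product of `n + 1` elements of `(x, y)` is a combination of monomials with `2i + 3j ≥ 2n + 2`.
All of these lie in `(a_m, b_m)`: since `y p² ∈ (a_{m+1}, b_{m+1})` for `p ∈ (a_m, b_m)`, induction
on `m` handles the monomials divisible by `y`, and the pure power `x^(2^(m+1)-3)` is what remains of
`g_{2^(m+2)-6} ∈ J_n` after removing its monomials divisible by `y`.

For `x^n ∉ J_n`: `a_m` and `b_m` are coprime, and `a_m ≡ x^(2^m-1)` mod `y`. If
`x^n = f a_m + g b_m`, then `∂/∂x` kills `x^n`, `b_m` and all squares, and leaves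
`a_{m-1}² ∣ ∂f · b_{m-1}²`. So `a_{m-1}² ∣ ∂f`, which forces `f ≡ w a_m` mod `y`. Reducing mod `y`
then gives `x^n = w x^(n+2)`, which is impossible.
-/

namespace CupLength

local notation "𝔽₂[w]" => MvPolynomial (Fin 2) (ZMod 2)

lemma mem_of_monomial_mem {σ R : Type*} [CommSemiring R] {I : Ideal (MvPolynomial σ R)}
    {p : MvPolynomial σ R} (h : ∀ d ∈ p.support, monomial d 1 ∈ I) : p ∈ I :=
  Ideal.span_le.mpr (Set.image_subset_iff.mpr h)
    (mem_ideal_span_monomial_image.mpr fun d hd => ⟨d, hd, le_rfl⟩)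

lemma pderiv_sq {σ R : Type*} [CommSemiring R] [CharP R 2] (i : σ) (p : MvPolynomial σ R) :
    pderiv i (p ^ 2) = 0 := by
  rw [pderiv_pow, Nat.cast_ofNat, CharTwo.two_eq_zero, zero_mul, zero_mul]

lemma monomial_one_fin_two {R : Type*} [CommSemiring R] (d : Fin 2 →₀ ℕ) :
    (monomial d 1 : MvPolynomial (Fin 2) R) = X 0 ^ d 0 * X 1 ^ d 1 := by
  rw [monomial_eq, C_1, one_mul, Finsupp.prod_pow, Fin.prod_univ_two]

lemma single_add_single_eq_iff {a b : ℕ} {d : Fin 2 →₀ ℕ} :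
    Finsupp.single 0 a + Finsupp.single 1 b = d ↔ a = d 0 ∧ b = d 1 := by
  constructor
  · rintro rfl
    simp
  · rintro ⟨rfl, rfl⟩
    ext i
    fin_cases i <;> simp

lemma four_le_two_pow (m : ℕ) : 4 ≤ 2 ^ (m + 2) :=
  Nat.pow_le_pow_right two_pos (Nat.le_add_left 2 m)

lemma coeff_gGen (r : ℕ) (d : Fin 2 →₀ ℕ) :
    coeff d (gGen r) =
      if 2 * d 0 + 3 * d 1 = r then ((d 0 + d 1).choose (d 0) : ZMod 2) else 0 := by
  simp only [gGen, coeff_sum, coeff_smul, X_pow_eq_monomial, monomial_mul, coeff_monomial,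
    single_add_single_eq_iff, smul_eq_mul, mul_one, mul_ite, mul_zero]
  rw [Finset.sum_eq_single (d 0 + d 1)]
  · by_cases h : 2 * d 0 + 3 * d 1 = r
    · rw [if_pos (by omega), if_pos h, show 3 * (d 0 + d 1) - r = d 0 by omega]
    · rw [if_neg (by omega), if_neg h]
  · intro s hs _
    rw [Finset.mem_Icc] at hs
    rw [if_neg (by omega)]
  · intro hs
    rw [Finset.mem_Icc] at hs
    rw [if_neg (by omega)]

lemma gGen_add_three (r : ℕ) : gGen (r + 3) = X 0 * gGen (r + 1) + X 1 * gGen r := by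
  ext d
  simp only [coeff_add, coeff_X_mul', coeff_gGen, Finsupp.mem_support_iff, Finsupp.tsub_apply,
    Finsupp.single_apply, Fin.isValue, ne_eq, ite_true, Fin.zero_eq_one_iff, Fin.one_eq_zero_iff,
    OfNat.ofNat_ne_one, ite_false, tsub_zero]
  generalize d 0 = a, d 1 = b
  rcases a with _ | a <;> rcases b with _ | b
  · simp
  · simp [show 3 * (b + 1) = r + 3 ↔ 3 * b = r by omega]
  · simp [show 2 * (a + 1) = r + 3 ↔ 2 * a = r + 1 by omega]
  · simp only [Nat.add_sub_cancel, Nat.succ_ne_zero, not_false_eq_true, ite_true,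
      show 2 * a + 3 * (b + 1) = r + 1 ↔ 2 * (a + 1) + 3 * (b + 1) = r + 3 by omega,
      show 2 * (a + 1) + 3 * b = r ↔ 2 * (a + 1) + 3 * (b + 1) = r + 3 by omega]
    split_ifs
    · rw [show a + 1 + (b + 1) = a + (b + 1) + 1 by omega, show a + 1 + b = a + (b + 1) by omega,
        Nat.choose_succ_succ, Nat.cast_add]
    · simp

lemma gGen_zero : gGen 0 = 1 := by simp [gGen]

lemma gGen_one : gGen 1 = 0 := by simp [gGen]

lemma gGen_two : gGen 2 = X 0 := by simp [gGen]

lemma gGen_doubling (r : ℕ) :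
    gGen (2 * r + 2) = gGen (r + 1) ^ 2 + X 0 * gGen r ^ 2 ∧
      gGen (2 * r + 3) = X 1 * gGen r ^ 2 := by
  have two : (2 : 𝔽₂[w]) = 0 := CharTwo.two_eq_zero
  have g₃ : gGen 3 = X 1 := by simpa [gGen_zero, gGen_one] using gGen_add_three 0
  induction r using Nat.twoStepInduction with
  | zero => exact ⟨by simp [gGen_zero, gGen_one, gGen_two], by simp [g₃, gGen_zero]⟩
  | one =>
    have g₄ : gGen 4 = X 0 ^ 2 := by simpa [gGen_one, gGen_two, sq] using gGen_add_three 1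
    have g₅ : gGen 5 = 0 := by
      have g₅ := gGen_add_three 2
      norm_num [g₃, gGen_two] at g₅
      linear_combination g₅ + X 0 * X 1 * two
    simp [g₄, g₅, gGen_one, gGen_two]
  | more t ih₀ ih₁ =>
    have e₁ : gGen (2 * (t + 2) + 2) = X 0 * gGen (2 * (t + 1) + 2) + X 1 * gGen (2 * t + 3) :=
      gGen_add_three _
    have e₂ : gGen (2 * (t + 2) + 3) =
        X 0 * gGen (2 * (t + 1) + 3) + X 1 * gGen (2 * (t + 1) + 2) :=
      gGen_add_three _
    have e₃ : gGen (t + 2 + 1) = X 0 * gGen (t + 1) + X 1 * gGen t := gGen_add_three _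
    rw [e₁, e₂, e₃, ih₁.1, ih₁.2, ih₀.2]
    constructor
    · linear_combination -X 0 * X 1 * gGen (t + 1) * gGen t * two
    · linear_combination X 0 * X 1 * gGen (t + 1) ^ 2 * two

noncomputable def gPair : ℕ → 𝔽₂[w] × 𝔽₂[w]
  | 0 => (1, 0)
  | m + 1 => ((gPair m).2 ^ 2 + X 0 * (gPair m).1 ^ 2, X 1 * (gPair m).1 ^ 2)

lemma gPair_eq (m : ℕ) : gPair m = (gGen (2 ^ (m + 1) - 2), gGen (2 ^ (m + 1) - 1)) := by
  induction m with
  | zero => simp [gPair, gGen_zero, gGen_one]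
  | succ m ih =>
    have h : 2 ≤ 2 ^ (m + 1) := Nat.le_self_pow (Nat.succ_ne_zero m) 2
    rw [gPair, ih, pow_succ 2 (m + 1),
      show 2 ^ (m + 1) * 2 - 2 = 2 * (2 ^ (m + 1) - 2) + 2 by omega,
      show 2 ^ (m + 1) * 2 - 1 = 2 * (2 ^ (m + 1) - 2) + 3 by omega, (gGen_doubling _).1,
      (gGen_doubling _).2, show 2 ^ (m + 1) - 2 + 1 = 2 ^ (m + 1) - 1 by omega]

lemma gGen_two_pow_sub_three (m : ℕ) : gGen (2 ^ (m + 2) - 3) = 0 := by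
  induction m with
  | zero => exact gGen_one
  | succ m ih =>
    have h := four_le_two_pow m
    rw [pow_succ, show 2 ^ (m + 2) * 2 - 3 = 2 * (2 ^ (m + 2) - 3) + 3 by omega,
      (gGen_doubling _).2, ih, zero_pow two_ne_zero, mul_zero]

noncomputable def pairIdeal (m : ℕ) : Ideal 𝔽₂[w] :=
  Ideal.span {(gPair m).1, (gPair m).2}

lemma Jideal_eq_pairIdeal (m : ℕ) : Jideal (2 ^ (m + 2) - 4) = pairIdeal (m + 1) := by
  have h := four_le_two_pow m
  rw [Jideal, pairIdeal, gPair_eq, show 2 ^ (m + 2) - 4 + 1 = 2 ^ (m + 2) - 3 by omega,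
    show 2 ^ (m + 2) - 4 + 2 = 2 ^ (m + 2) - 2 by omega,
    show 2 ^ (m + 2) - 4 + 3 = 2 ^ (m + 2) - 1 by omega, gGen_two_pow_sub_three]
  exact Submodule.span_insert_zero

lemma gGen_mem_pairIdeal (m : ℕ) {r : ℕ} (hr : 2 ^ (m + 2) - 3 ≤ r) :
    gGen r ∈ pairIdeal (m + 1) := by
  induction r using Nat.strong_induction_on with
  | _ r ih =>
    have h := four_le_two_pow m
    have hgen : gGen (2 ^ (m + 2) - 2) ∈ pairIdeal (m + 1) ∧
        gGen (2 ^ (m + 2) - 1) ∈ pairIdeal (m + 1) := by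
      rw [pairIdeal, gPair_eq]
      exact ⟨Ideal.subset_span (by simp), Ideal.subset_span (by simp)⟩
    obtain rfl | rfl | rfl | hr' : r = 2 ^ (m + 2) - 3 ∨ r = 2 ^ (m + 2) - 2 ∨
        r = 2 ^ (m + 2) - 1 ∨ 2 ^ (m + 2) ≤ r := by omega
    · rw [gGen_two_pow_sub_three]
      exact zero_mem _
    · exact hgen.1
    · exact hgen.2
    · obtain ⟨t, rfl⟩ : ∃ t, r = t + 3 := ⟨r - 3, by omega⟩
      rw [gGen_add_three]
      exact Ideal.add_mem _ (Ideal.mul_mem_left _ _ (ih _ (by omega) (by omega)))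
        (Ideal.mul_mem_left _ _ (ih _ (by omega) (by omega)))

lemma X1_mul_sq_mem_pairIdeal {m : ℕ} {p : 𝔽₂[w]} (hp : p ∈ pairIdeal m) :
    X 1 * p ^ 2 ∈ pairIdeal (m + 1) := by
  obtain ⟨α, β, rfl⟩ := Ideal.mem_span_pair.mp hp
  -- in characteristic 2, `y (α a + β b)² = y β² (b² + x a²) + (α² + x β²) y a²`
  refine Ideal.mem_span_pair.mpr ⟨X 1 * β ^ 2, α ^ 2 + X 0 * β ^ 2, ?_⟩
  simp only [gPair]
  linear_combination (-X 1 * α * β * (gPair m).1 * (gPair m).2 +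
    X 0 * X 1 * β ^ 2 * (gPair m).1 ^ 2) * (CharTwo.two_eq_zero : (2 : 𝔽₂[w]) = 0)

lemma X0_pow_mul_X1_pow_succ_mem_pairIdeal {m i j : ℕ}
    (ih : ∀ {i j : ℕ}, 2 ^ (m + 2) ≤ 2 * i + 3 * j + 7 → X 0 ^ i * X 1 ^ j ∈ pairIdeal m)
    (h : 2 ^ (m + 3) ≤ 2 * i + 3 * (j + 1) + 7) :
    X 0 ^ i * X 1 ^ (j + 1) ∈ pairIdeal (m + 1) := by
  have hsplit : (X 0 ^ i * X 1 ^ (j + 1) : 𝔽₂[w]) =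
      X 0 ^ (i % 2) * X 1 ^ (j % 2) * (X 1 * (X 0 ^ (i / 2) * X 1 ^ (j / 2)) ^ 2) := by
    conv_lhs => rw [← Nat.mod_add_div i 2, ← Nat.mod_add_div j 2]
    ring
  rw [hsplit]
  refine Ideal.mul_mem_left _ _ (X1_mul_sq_mem_pairIdeal (ih ?_))
  rw [pow_succ 2 (m + 2)] at h
  omega

lemma X0_pow_mem_pairIdeal {m : ℕ}
    (h : ∀ {i j : ℕ}, 2 ^ (m + 3) ≤ 2 * i + 3 * (j + 1) + 7 →
      X 0 ^ i * X 1 ^ (j + 1) ∈ pairIdeal (m + 1)) :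
    X 0 ^ (2 ^ (m + 2) - 3) ∈ pairIdeal (m + 1) := by
  have h4 := four_le_two_pow m
  have h₃ : 2 ^ (m + 3) = 2 ^ (m + 2) * 2 := pow_succ 2 (m + 2)
  have hg : gGen (2 ^ (m + 3) - 6) ∈ pairIdeal (m + 1) := gGen_mem_pairIdeal m (by omega)
  -- `x^(2^(m+2)-3)` is the only monomial of `g_{2^(m+3)-6}` not divisible by `y`
  rw [← sub_add_cancel (X 0 ^ (2 ^ (m + 2) - 3)) (gGen (2 ^ (m + 3) - 6))]
  refine Ideal.add_mem _ (mem_of_monomial_mem fun d hd => ?_) hg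
  rw [monomial_one_fin_two]
  rw [mem_support_iff, coeff_sub, coeff_X_pow, coeff_gGen] at hd
  have hsingle : Finsupp.single 0 (2 ^ (m + 2) - 3) = d ↔ 2 ^ (m + 2) - 3 = d 0 ∧ 0 = d 1 := by
    simpa using single_add_single_eq_iff (a := 2 ^ (m + 2) - 3) (b := 0) (d := d)
  rcases hd₁ : d 1 with _ | j
  · refine absurd ?_ hd
    simp only [hsingle, hd₁, and_true, add_zero, Nat.choose_self]
    split_ifs <;> first | omega | simp
  · rw [hd₁] at hsingle hd
    rw [if_neg (by rw [hsingle]; omega), zero_sub, neg_ne_zero, ne_eq, ite_eq_right_iff,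
      not_forall] at hd
    obtain ⟨hdeg, -⟩ := hd
    exact h (by omega)

lemma X0_pow_mul_X1_pow_mem_pairIdeal (m : ℕ) {i j : ℕ} (h : 2 ^ (m + 2) ≤ 2 * i + 3 * j + 7) :
    X 0 ^ i * X 1 ^ j ∈ pairIdeal m := by
  induction m generalizing i j with
  | zero => exact Ideal.mem_span_pair.mpr ⟨X 0 ^ i * X 1 ^ j, 0, by simp [gPair]⟩
  | succ m ih =>
    rcases j with _ | j
    · have h4 := four_le_two_pow m
      rw [pow_zero, mul_one, ← Nat.sub_add_cancel (show 2 ^ (m + 2) - 3 ≤ i by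
        rw [pow_succ 2 (m + 2)] at h; omega), pow_add]
      exact Ideal.mul_mem_left _ _
        (X0_pow_mem_pairIdeal fun h' => X0_pow_mul_X1_pow_succ_mem_pairIdeal ih h')
    · exact X0_pow_mul_X1_pow_succ_mem_pairIdeal ih h

lemma pow_idealOfVars_le_pairIdeal (m : ℕ) :
    idealOfVars (Fin 2) (ZMod 2) ^ (2 ^ (m + 1) - 3) ≤ pairIdeal m := by
  intro p hp
  rw [mem_pow_idealOfVars_iff] at hp
  refine mem_of_monomial_mem fun d hd => ?_
  have hdeg := hp d hd
  rw [Finsupp.degree_eq_sum, Fin.sum_univ_two] at hdeg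
  rw [monomial_one_fin_two]
  exact X0_pow_mul_X1_pow_mem_pairIdeal m (by rw [pow_succ 2 (m + 1)]; omega)

noncomputable def evalW3Zero : 𝔽₂[w] →ₐ[ZMod 2] Polynomial (ZMod 2) :=
  aeval ![Polynomial.X, 0]

@[simp] lemma evalW3Zero_X0 : evalW3Zero (X 0) = Polynomial.X := by simp [evalW3Zero]

@[simp] lemma evalW3Zero_X1 : evalW3Zero (X 1) = 0 := by simp [evalW3Zero]

lemma evalW3Zero_gPair (m : ℕ) :
    evalW3Zero (gPair m).1 = Polynomial.X ^ (2 ^ m - 1) ∧ evalW3Zero (gPair m).2 = 0 := by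
  induction m with
  | zero => simp [gPair]
  | succ m ih =>
    have h := Nat.one_le_two_pow (n := m)
    simp only [gPair, map_add, map_mul, map_pow, ih, evalW3Zero_X0, evalW3Zero_X1]
    refine ⟨?_, by simp⟩
    rw [← pow_mul, ← pow_succ', pow_succ 2 m, zero_pow two_ne_zero, zero_add]
    congr 1
    omega

lemma evalW3Zero_gPair_fst_ne_zero (m : ℕ) : evalW3Zero (gPair m).1 ≠ 0 := by
  rw [(evalW3Zero_gPair m).1]
  exact pow_ne_zero _ Polynomial.X_ne_zero

lemma gPair_fst_ne_zero (m : ℕ) : (gPair m).1 ≠ 0 := fun h =>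
  evalW3Zero_gPair_fst_ne_zero m (by rw [h, map_zero])

lemma not_X1_dvd_gPair_fst (m : ℕ) : ¬ X 1 ∣ (gPair m).1 := fun h =>
  evalW3Zero_gPair_fst_ne_zero m (zero_dvd_iff.mp (evalW3Zero_X1 ▸ map_dvd evalW3Zero h))

lemma isRelPrime_gPair (m : ℕ) : IsRelPrime (gPair m).1 (gPair m).2 := by
  induction m with
  | zero => exact isRelPrime_one_left
  | succ m ih =>
    have hX1 : IsRelPrime (gPair (m + 1)).1 (X 1) :=
      (X_prime.irreducible.isRelPrime_iff_not_dvd.mpr (not_X1_dvd_gPair_fst _)).symm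
    have ha : IsRelPrime (gPair (m + 1)).1 (gPair m).1 := by
      have := (ih.symm.pow_left (m := 2)).add_mul_right_left (X 0 * (gPair m).1)
      rwa [mul_assoc, ← sq] at this
    exact hX1.mul_right ha.pow_right

lemma pderiv_gPair_succ (m : ℕ) :
    pderiv 0 (gPair (m + 1)).1 = (gPair m).1 ^ 2 ∧ pderiv 0 (gPair (m + 1)).2 = 0 := by
  simp only [gPair, map_add, Derivation.leibniz, pderiv_sq, pderiv_X_self,
    pderiv_X_of_ne (show (1 : Fin 2) ≠ 0 by decide), smul_eq_mul, mul_one, mul_zero, zero_add,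
    add_zero, and_self]

lemma exists_eq_of_pderiv_eq_zero {m : ℕ} {f g : 𝔽₂[w]}
    (h : pderiv 0 (f * (gPair (m + 1)).1 + g * (gPair (m + 1)).2) = 0) :
    ∃ w v, f = w * (gPair (m + 1)).1 + X 1 * v := by
  rw [map_add, Derivation.leibniz, Derivation.leibniz, (pderiv_gPair_succ m).1,
    (pderiv_gPair_succ m).2, smul_zero, zero_add, smul_eq_mul, smul_eq_mul, smul_eq_mul] at h
  simp only [gPair] at h
  obtain ⟨w, hw⟩ : (gPair m).1 ^ 2 ∣ pderiv 0 f := by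
    refine ((isRelPrime_gPair m).pow (m := 2) (n := 2)).dvd_of_dvd_mul_right
      ⟨-(f + X 0 * pderiv 0 f + X 1 * pderiv 0 g), ?_⟩
    linear_combination h
  have key : (gPair m).1 ^ 2 * (f + w * (gPair (m + 1)).1 + X 1 * pderiv 0 g) = 0 := by
    simp only [gPair]
    linear_combination h - ((gPair m).2 ^ 2 + X 0 * (gPair m).1 ^ 2) * hw
  refine ⟨-w, -pderiv 0 g, ?_⟩
  linear_combination (mul_eq_zero.mp key).resolve_left (pow_ne_zero 2 (gPair_fst_ne_zero m))

lemma X0_pow_notMem_pairIdeal (m : ℕ) : X 0 ^ (2 ^ (m + 2) - 4) ∉ pairIdeal (m + 1) := by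
  intro hmem
  obtain ⟨f, g, hfg⟩ := Ideal.mem_span_pair.mp hmem
  have h4 := four_le_two_pow m
  have h₂ : 2 ^ (m + 2) = 2 ^ (m + 1) * 2 := pow_succ 2 (m + 1)
  obtain ⟨w, v, rfl⟩ := exists_eq_of_pderiv_eq_zero (f := f) (g := g) (by
    rw [hfg, show 2 ^ (m + 2) - 4 = (2 ^ (m + 1) - 2) * 2 by omega, pow_mul, pderiv_sq])
  have hψ := congrArg evalW3Zero hfg
  simp only [map_add, map_mul, map_pow, evalW3Zero_X0, evalW3Zero_X1, (evalW3Zero_gPair _).2,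
    (evalW3Zero_gPair (m + 1)).1, zero_mul, mul_zero, add_zero] at hψ
  have hdvd : (Polynomial.X : Polynomial (ZMod 2)) ^ (2 ^ (m + 2) - 2) ∣
      Polynomial.X ^ (2 ^ (m + 2) - 4) :=
    ⟨evalW3Zero w, by rw [← hψ, mul_assoc, ← pow_add, mul_comm]; congr 2; omega⟩
  have := (pow_dvd_pow_iff Polynomial.X_ne_zero Polynomial.not_isUnit_X).mp hdvd
  omega

lemma augIdeal_le_map_idealOfVars (n : ℕ) :
    augIdeal n ≤ (idealOfVars (Fin 2) (ZMod 2)).map (Ideal.Quotient.mk (Jideal n)) := by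
  rw [augIdeal, Ideal.span_le, Set.insert_subset_iff, Set.singleton_subset_iff]
  exact ⟨Ideal.mem_map_of_mem _ (Ideal.subset_span ⟨0, rfl⟩),
    Ideal.mem_map_of_mem _ (Ideal.subset_span ⟨1, rfl⟩)⟩

lemma augIdeal_pow_eq_bot (m : ℕ) : augIdeal (2 ^ (m + 2) - 4) ^ (2 ^ (m + 2) - 3) = ⊥ :=
  eq_bot_iff.mpr <| calc
    _ ≤ ((idealOfVars (Fin 2) (ZMod 2)).map (Ideal.Quotient.mk _)) ^ (2 ^ (m + 2) - 3) :=
      Ideal.pow_right_mono (augIdeal_le_map_idealOfVars _) _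
    _ = (idealOfVars (Fin 2) (ZMod 2) ^ (2 ^ (m + 2) - 3)).map (Ideal.Quotient.mk _) :=
      (Ideal.map_pow _ _ _).symm
    _ ≤ (Jideal (2 ^ (m + 2) - 4)).map (Ideal.Quotient.mk _) :=
      Ideal.map_mono (Jideal_eq_pairIdeal m ▸ pow_idealOfVars_le_pairIdeal (m + 1))
    _ = ⊥ := Ideal.map_quotient_self _

end CupLength

open CupLength in
theorem cupLength_quotient_general (m : ℕ) (n : ℕ)
    (hn : n = 2 ^ (m + 1) - 4) :
    (∃ x : Fin n → Rquot n, (∀ i, x i ∈ augIdeal n) ∧ ∏ i, x i ≠ 0) ∧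
      ∀ y : Fin (n + 1) → Rquot n, (∀ i, y i ∈ augIdeal n) → ∏ i, y i = 0 := by
  obtain ⟨k, rfl⟩ : ∃ k, n = 2 ^ (k + 2) - 4 := ⟨m - 1, by rcases m with _ | m <;> simp [hn]⟩
  refine ⟨⟨fun _ => Ideal.Quotient.mk _ (X 0), fun _ => Ideal.subset_span (by simp), ?_⟩,
    fun y hy => ?_⟩
  · rw [Finset.prod_const, Finset.card_univ, Fintype.card_fin, ← map_pow, Ne,
      Ideal.Quotient.eq_zero_iff_mem, Jideal_eq_pairIdeal]
    exact X0_pow_notMem_pairIdeal k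
  · have hprod := Ideal.prod_mem_prod (s := Finset.univ) fun i _ => hy i
    have hbot := augIdeal_pow_eq_bot k
    rw [show 2 ^ (k + 2) - 3 = 2 ^ (k + 2) - 4 + 1 by have := four_le_two_pow k; omega] at hbot
    rw [Finset.prod_const, Finset.card_univ, Fintype.card_fin, hbot] at hprod
    exact Ideal.mem_bot.mp hprod

/-- For `m ≥ 2` and `n = 2^(m+1) - 4`, the cup-length of
`R = ℤ/2[w2,w3]/J_n` equals `n`: some product of `n` elements of the
augmentation ideal is nonzero, but every product of `n+1` elements of the
augmentation ideal is zero. -/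
theorem cupLength_quotient (m : ℕ) (hm : 2 ≤ m) (n : ℕ)
    (hn : n = 2 ^ (m + 1) - 4) :
    (∃ x : Fin n → Rquot n, (∀ i, x i ∈ augIdeal n) ∧ ∏ i, x i ≠ 0) ∧
      ∀ y : Fin (n + 1) → Rquot n, (∀ i, y i ∈ augIdeal n) → ∏ i, y i = 0 :=
  cupLength_quotient_general m n hn
end
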